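/- Under the assumptions that ‖Ψ_z‖_{L^∞(𝔻)} ≤ C₁ and ‖ω̃‖_{L^∞(𝔻)} ≤ C₂, the function b̃(y) = (i/2π) ∫_𝔻 [1/(conj(y)−conj(s)) − 1/(conj(y)−1/s)]·ω̃(s)·|Ψ_z(s)|² ds satisfies the log-Lipschitz bound |b̃(z₁) − b̃(z₂)| ≤ C(C₁,C₂)·φ(|z₁ − z₂|) for all z₁, z₂ in the closed unit disc, where φ(x) = x·max(−ln x, 1). -/

import Mathlib

open MeasureTheory

noncomputable def phi (x : ℝ) : ℝ := x * max (-Real.log x) 1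

/-- The Biot–Savart-type velocity field on the unit disc, in conformal coordinates. -/
noncomputable def btil (Psi' : ℂ → ℂ) (w : ℂ → ℝ) (y : ℂ) : ℂ :=
  (Complex.I / (2 * Real.pi)) * ∫ s in {z : ℂ | ‖z‖ < 1},
    (1 / (starRingEnd ℂ y - starRingEnd ℂ s) - 1 / (starRingEnd ℂ y - 1 / s))
      * (w s : ℂ) * ((‖Psi' s‖)^2 : ℝ)

/-!
Since `‖s - z‖ ≤ ‖conj z - 1 / s‖` on the closed unit disc, both the conjugate Cauchy kernel and
its reflection in the unit circle have difference quotients bounded by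
`‖z₁ - z₂‖ / (‖s - z₁‖ * ‖s - z₂‖)`. Splitting according to which of `z₁`, `z₂` is closer to `s`
bounds `1 / (‖s - z₁‖ * ‖s - z₂‖)` by the radial functions `1 / (r * max (d / 2) r)` centred at
`z₁` and `z₂`, where `d = ‖z₁ - z₂‖`; in polar coordinates their integral over a disc of radius 2
is `2π (1 + log (4 / d))`, which produces the modulus `d * max (-log d) 1`.
-/

open Metric Set Real
open scoped ENNReal

theorem lintegral_fun_norm_addHaar {E : Type*} [NormedAddCommGroup E] [NormedSpace ℝ E]
    [Nontrivial E] [MeasurableSpace E] [BorelSpace E] [FiniteDimensional ℝ E]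
    (μ : Measure E) [μ.IsAddHaarMeasure] {f : ℝ → ℝ≥0∞} (hf : Measurable f) :
    ∫⁻ x, f ‖x‖ ∂μ = Module.finrank ℝ E * μ (ball 0 1) *
      ∫⁻ y in Ioi (0 : ℝ), ENNReal.ofReal (y ^ (Module.finrank ℝ E - 1)) * f y :=
  calc ∫⁻ x, f ‖x‖ ∂μ = ∫⁻ x : ({(0)}ᶜ : Set E), f ‖x.1‖ ∂(μ.comap (↑)) := by
        rw [lintegral_subtype_comap (measurableSet_singleton _).compl (fun x => f ‖x‖),
          restrict_compl_singleton]
    _ = ∫⁻ x, f x.2 ∂μ.toSphere.prod (.volumeIoiPow (Module.finrank ℝ E - 1)) := by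
        simpa using μ.measurePreserving_homeomorphUnitSphereProd.lintegral_comp_emb
          (Homeomorph.measurableEmbedding _) (f ∘ Subtype.val ∘ Prod.snd)
    _ = μ.toSphere univ * ∫⁻ y : Ioi (0 : ℝ), f y ∂.volumeIoiPow (Module.finrank ℝ E - 1) := by
        rw [lintegral_prod (fun p : sphere (0 : E) 1 × Ioi (0 : ℝ) => f p.2)
          (hf.comp (measurable_subtype_coe.comp measurable_snd)).aemeasurable]
        simp [lintegral_const, mul_comm]
    _ = _ := by
        rw [μ.toSphere_apply_univ, Measure.volumeIoiPow,
          lintegral_withDensity_eq_lintegral_mul _ (by fun_prop)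
            (show Measurable fun y : Ioi (0 : ℝ) => f y from hf.comp measurable_subtype_coe),
          ← lintegral_subtype_comap measurableSet_Ioi]
        rfl

theorem lintegral_ball_comp_norm_sub (c : ℂ) (R : ℝ) {f : ℝ → ℝ≥0∞} (hf : Measurable f) :
    ∫⁻ s in ball c R, f ‖s - c‖
      = ENNReal.ofReal (2 * π) * ∫⁻ r in Ioo 0 R, ENNReal.ofReal r * f r := by
  have hball : ∀ s, (ball c R).indicator (fun s => f ‖s - c‖) s = (Iio R).indicator f ‖s - c‖ := by
    intro s
    simp only [indicator, mem_ball, dist_eq_norm, mem_Iio]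
  rw [← lintegral_indicator measurableSet_ball, funext hball,
    lintegral_sub_right_eq_self (fun s => (Iio R).indicator f ‖s‖) c,
    lintegral_fun_norm_addHaar _ (hf.indicator measurableSet_Iio), Complex.finrank_real_complex,
    Complex.volume_ball, ← lintegral_indicator measurableSet_Ioo,
    ← lintegral_indicator measurableSet_Ioi]
  congr 1
  · rw [ENNReal.ofReal_mul zero_le_two, ← NNReal.coe_real_pi, ENNReal.ofReal_coe_nnreal]
    simp
  · congr 1
    ext r
    by_cases h0 : 0 < r <;> by_cases hR : r < R <;> simp [indicator, h0, hR]

theorem continuous_inv_max {δ : ℝ} (hδ : 0 < δ) : Continuous fun r : ℝ => (max δ r)⁻¹ :=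
  (continuous_const.max continuous_id).inv₀ fun r => (hδ.trans_le (le_max_left δ r)).ne'

theorem integral_inv_max {δ R : ℝ} (hδ : 0 < δ) (hδR : δ ≤ R) :
    ∫ r in (0 : ℝ)..R, (max δ r)⁻¹ = 1 + log (R / δ) := by
  have hint : ∀ a b : ℝ, IntervalIntegrable (fun r => (max δ r)⁻¹) volume a b :=
    (continuous_inv_max hδ).intervalIntegrable
  rw [← intervalIntegral.integral_add_adjacent_intervals (hint 0 δ) (hint δ R)]
  have h_const : ∫ r in (0 : ℝ)..δ, (max δ r)⁻¹ = ∫ _ in (0 : ℝ)..δ, δ⁻¹ :=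
    intervalIntegral.integral_congr fun r hr => by
      rw [uIcc_of_le hδ.le] at hr
      simp [max_eq_left hr.2]
  have h_inv : ∫ r in δ..R, (max δ r)⁻¹ = ∫ r in δ..R, r⁻¹ :=
    intervalIntegral.integral_congr fun r hr => by
      rw [uIcc_of_le hδR] at hr
      simp [max_eq_right hr.1]
  have h0 : (0 : ℝ) ∉ uIcc δ R := by
    rw [uIcc_of_le hδR]
    exact fun h => hδ.not_ge h.1
  rw [h_const, h_inv, intervalIntegral.integral_const, integral_inv h0, sub_zero, smul_eq_mul,
    mul_inv_cancel₀ hδ.ne']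

theorem lintegral_ball_inv_mul_max (c : ℂ) {δ R : ℝ} (hδ : 0 < δ) (hδR : δ ≤ R) :
    ∫⁻ s in ball c R, ENNReal.ofReal (‖s - c‖ * max δ ‖s - c‖)⁻¹
      = ENNReal.ofReal (2 * π * (1 + log (R / δ))) := by
  rw [lintegral_ball_comp_norm_sub c R (f := fun r => ENNReal.ofReal (r * max δ r)⁻¹) (by fun_prop)]
  have h : ∀ r ∈ Ioo 0 R, ENNReal.ofReal r * ENNReal.ofReal (r * max δ r)⁻¹
      = ENNReal.ofReal (max δ r)⁻¹ := by
    intro r hr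
    rw [← ENNReal.ofReal_mul hr.1.le, mul_inv, ← mul_assoc, mul_inv_cancel₀ hr.1.ne', one_mul]
  have hR : 0 ≤ R := hδ.le.trans hδR
  rw [setLIntegral_congr_fun measurableSet_Ioo h, ← ofReal_integral_eq_lintegral_ofReal
      ((continuous_inv_max hδ).integrableOn_Icc.mono_set Ioo_subset_Icc_self)
      (.of_forall fun r => inv_nonneg.2 (hδ.le.trans (le_max_left δ r))),
    ← integral_Ioc_eq_integral_Ioo, ← intervalIntegral.integral_of_le hR, integral_inv_max hδ hδR,
    ← ENNReal.ofReal_mul two_pi_pos.le]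

theorem lintegral_ball_inv_norm_sub (c : ℂ) (R : ℝ) :
    ∫⁻ s in ball c R, ENNReal.ofReal ‖s - c‖⁻¹ = ENNReal.ofReal (2 * π * R) := by
  rw [lintegral_ball_comp_norm_sub c R (f := fun r => ENNReal.ofReal r⁻¹) (by fun_prop)]
  have h : ∀ r ∈ Ioo 0 R, ENNReal.ofReal r * ENNReal.ofReal r⁻¹ = 1 := by
    intro r hr
    rw [← ENNReal.ofReal_mul hr.1.le, mul_inv_cancel₀ hr.1.ne', ENNReal.ofReal_one]
  rw [setLIntegral_congr_fun measurableSet_Ioo h, setLIntegral_const, one_mul, Real.volume_Ioo,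
    sub_zero, ← ENNReal.ofReal_mul two_pi_pos.le]

noncomputable def diskKernel (y s : ℂ) : ℂ :=
  1 / (starRingEnd ℂ y - starRingEnd ℂ s) - 1 / (starRingEnd ℂ y - 1 / s)

theorem norm_sub_le_norm_conj_sub_inv {z s : ℂ} (hz : ‖z‖ ≤ 1) (hs : ‖s‖ ≤ 1) :
    ‖s - z‖ ≤ ‖starRingEnd ℂ z - 1 / s‖ := by
  rcases eq_or_ne s 0 with rfl | hs0
  · simp
  have hsq : ‖s - z‖ ^ 2 ≤ ‖s * starRingEnd ℂ z - 1‖ ^ 2 := by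
    have hid : ‖s * starRingEnd ℂ z - 1‖ ^ 2 - ‖s - z‖ ^ 2 = (1 - ‖z‖ ^ 2) * (1 - ‖s‖ ^ 2) := by
      simp only [Complex.sq_norm, Complex.normSq_apply, Complex.sub_re, Complex.sub_im,
        Complex.mul_re, Complex.mul_im, Complex.conj_re, Complex.conj_im, Complex.one_re,
        Complex.one_im]
      ring
    nlinarith [mul_nonneg (sub_nonneg.2 (pow_le_one₀ (n := 2) (norm_nonneg z) hz))
      (sub_nonneg.2 (pow_le_one₀ (n := 2) (norm_nonneg s) hs))]
  calc ‖s - z‖ ≤ ‖s * starRingEnd ℂ z - 1‖ :=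
        (pow_le_pow_iff_left₀ (norm_nonneg _) (norm_nonneg _) two_ne_zero).1 hsq
    _ = ‖s‖ * ‖starRingEnd ℂ z - 1 / s‖ := by
        rw [← norm_mul, mul_sub, mul_one_div_cancel hs0]
    _ ≤ ‖starRingEnd ℂ z - 1 / s‖ := mul_le_of_le_one_left (norm_nonneg _) hs

theorem norm_inv_sub_inv_le {𝕜 : Type*} [NormedField 𝕜] {a b : 𝕜} {r t : ℝ} (hr : 0 < r)
    (ht : 0 < t) (ha : r ≤ ‖a‖) (hb : t ≤ ‖b‖) : ‖a⁻¹ - b⁻¹‖ ≤ ‖a - b‖ / (r * t) := by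
  have ha0 : a ≠ 0 := norm_pos_iff.1 (hr.trans_le ha)
  have hb0 : b ≠ 0 := norm_pos_iff.1 (ht.trans_le hb)
  rw [inv_sub_inv ha0 hb0, norm_div, norm_mul, norm_sub_rev]
  gcongr

theorem norm_conj_sub_conj (z s : ℂ) : ‖starRingEnd ℂ z - starRingEnd ℂ s‖ = ‖s - z‖ := by
  rw [← map_sub, Complex.norm_conj, norm_sub_rev]

theorem norm_diskKernel_le {y s : ℂ} (hy : ‖y‖ ≤ 1) (hs : ‖s‖ ≤ 1) (hsy : s ≠ y) :
    ‖diskKernel y s‖ ≤ 2 * ‖s - y‖⁻¹ := by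
  have hpos : 0 < ‖s - y‖ := norm_pos_iff.2 (sub_ne_zero.2 hsy)
  calc ‖diskKernel y s‖
      ≤ ‖1 / (starRingEnd ℂ y - starRingEnd ℂ s)‖ + ‖1 / (starRingEnd ℂ y - 1 / s)‖ :=
        norm_sub_le _ _
    _ ≤ ‖s - y‖⁻¹ + ‖s - y‖⁻¹ := by
        rw [norm_div, norm_div, norm_one, norm_conj_sub_conj, one_div, one_div]
        gcongr
        exact norm_sub_le_norm_conj_sub_inv hy hs
    _ = 2 * ‖s - y‖⁻¹ := by ring

theorem norm_diskKernel_sub_le {z₁ z₂ s : ℂ} (h₁ : ‖z₁‖ ≤ 1) (h₂ : ‖z₂‖ ≤ 1) (hs : ‖s‖ ≤ 1)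
    (hs₁ : s ≠ z₁) (hs₂ : s ≠ z₂) :
    ‖diskKernel z₁ s - diskKernel z₂ s‖ ≤ 2 * ‖z₁ - z₂‖ / (‖s - z₁‖ * ‖s - z₂‖) := by
  have hpos₁ : 0 < ‖s - z₁‖ := norm_pos_iff.2 (sub_ne_zero.2 hs₁)
  have hpos₂ : 0 < ‖s - z₂‖ := norm_pos_iff.2 (sub_ne_zero.2 hs₂)
  set A₁ := starRingEnd ℂ z₁ - starRingEnd ℂ s
  set A₂ := starRingEnd ℂ z₂ - starRingEnd ℂ s
  set B₁ := starRingEnd ℂ z₁ - 1 / s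
  set B₂ := starRingEnd ℂ z₂ - 1 / s
  have hA : ‖A₁ - A₂‖ = ‖z₁ - z₂‖ := by
    rw [sub_sub_sub_cancel_right, norm_conj_sub_conj, norm_sub_rev]
  have hB : ‖B₁ - B₂‖ = ‖z₁ - z₂‖ := by
    rw [sub_sub_sub_cancel_right, ← map_sub, Complex.norm_conj]
  calc ‖diskKernel z₁ s - diskKernel z₂ s‖ = ‖(A₁⁻¹ - A₂⁻¹) - (B₁⁻¹ - B₂⁻¹)‖ := by
        congr 1
        simp only [diskKernel, A₁, A₂, B₁, B₂, one_div]
        ring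
    _ ≤ ‖A₁⁻¹ - A₂⁻¹‖ + ‖B₁⁻¹ - B₂⁻¹‖ := norm_sub_le _ _
    _ ≤ ‖A₁ - A₂‖ / (‖s - z₁‖ * ‖s - z₂‖) + ‖B₁ - B₂‖ / (‖s - z₁‖ * ‖s - z₂‖) :=
        add_le_add
          (norm_inv_sub_inv_le hpos₁ hpos₂ (norm_conj_sub_conj _ _).ge
            (norm_conj_sub_conj _ _).ge)
          (norm_inv_sub_inv_le hpos₁ hpos₂ (norm_sub_le_norm_conj_sub_inv h₁ hs)
            (norm_sub_le_norm_conj_sub_inv h₂ hs))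
    _ = 2 * ‖z₁ - z₂‖ / (‖s - z₁‖ * ‖s - z₂‖) := by rw [hA, hB]; ring

theorem measurable_diskKernel (y : ℂ) : Measurable (diskKernel y) := by
  have : Measurable (starRingEnd ℂ) := Complex.continuous_conj.measurable
  unfold diskKernel
  fun_prop

theorem integrableOn_ball_inv_norm_sub (c : ℂ) (R : ℝ) :
    IntegrableOn (fun s => ‖s - c‖⁻¹) (ball c R) := by
  refine ⟨by fun_prop, ?_⟩
  rw [hasFiniteIntegral_iff_ofReal (.of_forall fun s => inv_nonneg.2 (norm_nonneg _)),
    lintegral_ball_inv_norm_sub]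
  exact ENNReal.ofReal_lt_top

theorem integrableOn_diskKernel_mul {h : ℂ → ℂ} {A : ℝ}
    (hh : AEStronglyMeasurable h (volume.restrict (ball 0 1)))
    (hA : ∀ s ∈ ball (0 : ℂ) 1, ‖h s‖ ≤ A) {y : ℂ} (hy : ‖y‖ ≤ 1) :
    IntegrableOn (fun s => diskKernel y s * h s) (ball 0 1) := by
  have hdom : IntegrableOn (fun s => 2 * A * ‖s - y‖⁻¹) (ball 0 1) :=
    IntegrableOn.mono_set ((integrableOn_ball_inv_norm_sub y 2).const_mul _)
      (ball_subset_ball' (by rw [dist_zero_left]; linarith))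
  refine hdom.mono' ((measurable_diskKernel y).aestronglyMeasurable.mul hh) ?_
  filter_upwards [ae_restrict_mem measurableSet_ball, ae_restrict_of_ae (Measure.ae_ne volume y)]
    with s hs hsy
  have hs1 : ‖s‖ ≤ 1 := (mem_ball_zero_iff.1 hs).le
  calc ‖diskKernel y s * h s‖ = ‖diskKernel y s‖ * ‖h s‖ := norm_mul _ _
    _ ≤ 2 * ‖s - y‖⁻¹ * A :=
        mul_le_mul (norm_diskKernel_le hy hs1 hsy) (hA s hs) (norm_nonneg _) (by positivity)
    _ = 2 * A * ‖s - y‖⁻¹ := by ring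

theorem inv_mul_norm_sub_le {E : Type*} [SeminormedAddCommGroup E] {a b s : E}
    (hab : 0 < ‖a - b‖) :
    (‖s - a‖ * ‖s - b‖)⁻¹ ≤ (‖s - a‖ * max (‖a - b‖ / 2) ‖s - a‖)⁻¹
      + (‖s - b‖ * max (‖a - b‖ / 2) ‖s - b‖)⁻¹ := by
  wlog h : ‖s - a‖ ≤ ‖s - b‖ generalizing a b
  · have := this (by rwa [norm_sub_rev]) (le_of_not_ge h)
    rwa [norm_sub_rev b a, mul_comm, add_comm] at this
  have hmax : max (‖a - b‖ / 2) ‖s - a‖ ≤ ‖s - b‖ :=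
    max_le (by linarith [norm_sub_le_norm_sub_add_norm_sub a s b, norm_sub_rev a s]) h
  have hpos : 0 < max (‖a - b‖ / 2) ‖s - a‖ := lt_max_of_lt_left (half_pos hab)
  calc (‖s - a‖ * ‖s - b‖)⁻¹ ≤ (‖s - a‖ * max (‖a - b‖ / 2) ‖s - a‖)⁻¹ := by
        rw [mul_inv, mul_inv]
        gcongr
    _ ≤ _ := le_add_of_nonneg_right (by positivity)

theorem lintegral_ball_inv_mul_norm_sub_le {a b : ℂ} (ha : ‖a‖ ≤ 1) (hb : ‖b‖ ≤ 1)
    (hab : a ≠ b) :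
    ∫⁻ s in ball 0 1, ENNReal.ofReal (‖s - a‖ * ‖s - b‖)⁻¹
      ≤ ENNReal.ofReal (16 * π * max (-log ‖a - b‖) 1) := by
  set d := ‖a - b‖
  have hd : 0 < d := norm_pos_iff.2 (sub_ne_zero.2 hab)
  have hd2 : d ≤ 2 := by linarith [norm_sub_le a b]
  set g : ℂ → ℂ → ℝ := fun c s => (‖s - c‖ * max (d / 2) ‖s - c‖)⁻¹
  have hg : ∀ c, ‖c‖ ≤ 1 → ∫⁻ s in ball 0 1, ENNReal.ofReal (g c s)
      ≤ ENNReal.ofReal (2 * π * (1 + log (2 / (d / 2)))) := fun c hc =>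
    calc ∫⁻ s in ball 0 1, ENNReal.ofReal (g c s) ≤ ∫⁻ s in ball c 2, ENNReal.ofReal (g c s) :=
          lintegral_mono_set (ball_subset_ball' (by rw [dist_zero_left]; linarith))
      _ = _ := lintegral_ball_inv_mul_max c (half_pos hd) (by linarith)
  have hlog : 1 + log (2 / (d / 2)) ≤ 4 * max (-log d) 1 := by
    rw [show 2 / (d / 2) = 2 ^ 2 / d by ring, log_div (by positivity) hd.ne', log_pow,
      Nat.cast_ofNat]
    linarith [log_two_lt_d9, le_max_left (-log d) 1, le_max_right (-log d) 1]
  calc ∫⁻ s in ball 0 1, ENNReal.ofReal (‖s - a‖ * ‖s - b‖)⁻¹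
      ≤ ∫⁻ s in ball 0 1, (ENNReal.ofReal (g a s) + ENNReal.ofReal (g b s)) :=
        lintegral_mono fun s => by
          rw [← ENNReal.ofReal_add (by positivity) (by positivity)]
          exact ENNReal.ofReal_le_ofReal (inv_mul_norm_sub_le hd)
    _ = (∫⁻ s in ball 0 1, ENNReal.ofReal (g a s)) + ∫⁻ s in ball 0 1, ENNReal.ofReal (g b s) :=
        lintegral_add_left (by simp only [g]; fun_prop) _
    _ ≤ ENNReal.ofReal (2 * π * (1 + log (2 / (d / 2))))
          + ENNReal.ofReal (2 * π * (1 + log (2 / (d / 2)))) :=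
        add_le_add (hg a ha) (hg b hb)
    _ ≤ ENNReal.ofReal (16 * π * max (-log d) 1) := by
        have hX : 0 ≤ 2 * π * (1 + log (2 / (d / 2))) :=
          mul_nonneg two_pi_pos.le (by linarith [log_nonneg (show 1 ≤ 2 / (d / 2) by
            rw [le_div_iff₀ (half_pos hd)]; linarith)])
        rw [← ENNReal.ofReal_add hX hX]
        exact ENNReal.ofReal_le_ofReal (by nlinarith [pi_pos])

theorem norm_setIntegral_diskKernel_mul_sub_le {h : ℂ → ℂ} {A : ℝ}
    (hh : AEStronglyMeasurable h (volume.restrict (ball 0 1)))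
    (hA : ∀ s ∈ ball (0 : ℂ) 1, ‖h s‖ ≤ A) {z₁ z₂ : ℂ} (h₁ : ‖z₁‖ ≤ 1) (h₂ : ‖z₂‖ ≤ 1) :
    ‖(∫ s in ball 0 1, diskKernel z₁ s * h s) - ∫ s in ball 0 1, diskKernel z₂ s * h s‖
      ≤ 32 * π * A * phi ‖z₁ - z₂‖ := by
  rcases eq_or_ne z₁ z₂ with rfl | hne
  · simp [phi]
  have hA0 : 0 ≤ A := (norm_nonneg _).trans (hA 0 (mem_ball_self one_pos))
  set d := ‖z₁ - z₂‖
  set M := max (-log d) 1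
  have hM : 0 ≤ M := zero_le_one.trans (le_max_right _ _)
  have hpt : ∀ᵐ s ∂volume.restrict (ball 0 1),
      ENNReal.ofReal ‖diskKernel z₁ s * h s - diskKernel z₂ s * h s‖
        ≤ ENNReal.ofReal (2 * A * d) * ENNReal.ofReal (‖s - z₁‖ * ‖s - z₂‖)⁻¹ := by
    filter_upwards [ae_restrict_mem measurableSet_ball,
      ae_restrict_of_ae (Measure.ae_ne volume z₁), ae_restrict_of_ae (Measure.ae_ne volume z₂)]
      with s hs hs₁ hs₂
    rw [← ENNReal.ofReal_mul (by positivity), ← sub_mul, norm_mul]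
    refine ENNReal.ofReal_le_ofReal ?_
    calc ‖diskKernel z₁ s - diskKernel z₂ s‖ * ‖h s‖
        ≤ 2 * d / (‖s - z₁‖ * ‖s - z₂‖) * A :=
          mul_le_mul (norm_diskKernel_sub_le h₁ h₂ (mem_ball_zero_iff.1 hs).le hs₁ hs₂) (hA s hs)
            (norm_nonneg _) (by positivity)
      _ = 2 * A * d * (‖s - z₁‖ * ‖s - z₂‖)⁻¹ := by ring
  have hlint : ∫⁻ s in ball 0 1,
      ENNReal.ofReal ‖diskKernel z₁ s * h s - diskKernel z₂ s * h s‖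
        ≤ ENNReal.ofReal (32 * π * A * phi d) :=
    calc _ ≤ ∫⁻ s in ball 0 1,
            ENNReal.ofReal (2 * A * d) * ENNReal.ofReal (‖s - z₁‖ * ‖s - z₂‖)⁻¹ :=
          lintegral_mono_ae hpt
      _ = ENNReal.ofReal (2 * A * d) *
            ∫⁻ s in ball 0 1, ENNReal.ofReal (‖s - z₁‖ * ‖s - z₂‖)⁻¹ :=
          lintegral_const_mul' _ _ ENNReal.ofReal_ne_top
      _ ≤ ENNReal.ofReal (2 * A * d) * ENNReal.ofReal (16 * π * M) :=
          mul_le_mul_right (lintegral_ball_inv_mul_norm_sub_le h₁ h₂ hne) _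
      _ = ENNReal.ofReal (32 * π * A * phi d) := by
          rw [← ENNReal.ofReal_mul (by positivity)]
          congr 1
          simp only [phi, M]
          ring
  rw [← integral_sub (integrableOn_diskKernel_mul hh hA h₁) (integrableOn_diskKernel_mul hh hA h₂)]
  exact (norm_integral_le_lintegral_norm _).trans
    (ENNReal.toReal_le_of_le_ofReal (by unfold phi; positivity) hlint)

theorem btil_logLipschitz (C₁ C₂ : ℝ) (hC₁ : 0 < C₁) (hC₂ : 0 < C₂) :
    ∃ C : ℝ, 0 < C ∧ ∀ (Psi' : ℂ → ℂ) (w : ℂ → ℝ),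
      DifferentiableOn ℂ Psi' {z : ℂ | ‖z‖ < 1} →
      (∀ z, ‖z‖ < 1 → ‖Psi' z‖ ≤ C₁) →
      Measurable w → (∀ z, |w z| ≤ C₂) →
      ∀ z₁ z₂ : ℂ, ‖z₁‖ ≤ 1 → ‖z₂‖ ≤ 1 →
        ‖btil Psi' w z₁ - btil Psi' w z₂‖ ≤ C * phi (‖z₁ - z₂‖) := by
  refine ⟨16 * C₁ ^ 2 * C₂, by positivity, fun Psi' w hΨ hΨC₁ hw hwC₂ z₁ z₂ h₁ h₂ => ?_⟩
  set h : ℂ → ℂ := fun s => (w s : ℂ) * ((‖Psi' s‖ ^ 2 : ℝ) : ℂ)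
  have hbtil : ∀ y, btil Psi' w y
      = Complex.I / (2 * π) * ∫ s in ball 0 1, diskKernel y s * h s := fun y => by
    simp only [btil, ← ball_zero_eq, diskKernel, h, mul_assoc]
  have hh : AEStronglyMeasurable h (volume.restrict (ball 0 1)) := by
    have hΨc : ContinuousOn Psi' (ball 0 1) := ball_zero_eq (E := ℂ) 1 ▸ hΨ.continuousOn
    exact (Complex.measurable_ofReal.comp hw).aestronglyMeasurable.mul
      ((Complex.continuous_ofReal.comp_continuousOn (hΨc.norm.pow 2)).aestronglyMeasurable
        measurableSet_ball)
  have hA : ∀ s ∈ ball (0 : ℂ) 1, ‖h s‖ ≤ C₂ * C₁ ^ 2 := fun s hs => by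
    rw [norm_mul, Complex.norm_real, Complex.norm_real, Real.norm_eq_abs, norm_pow, norm_norm]
    exact mul_le_mul (hwC₂ s) (pow_le_pow_left₀ (norm_nonneg _)
      (hΨC₁ s (mem_ball_zero_iff.1 hs)) 2) (by positivity) hC₂.le
  have hnorm : ‖Complex.I / (2 * π)‖ = (2 * π)⁻¹ := by simp [abs_of_pos pi_pos]
  rw [hbtil, hbtil, ← mul_sub, norm_mul, hnorm]
  calc (2 * π)⁻¹ * ‖_‖ ≤ (2 * π)⁻¹ * (32 * π * (C₂ * C₁ ^ 2) * phi ‖z₁ - z₂‖) :=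
        mul_le_mul_of_nonneg_left (norm_setIntegral_diskKernel_mul_sub_le hh hA h₁ h₂)
          (by positivity)
    _ = 16 * C₁ ^ 2 * C₂ * phi ‖z₁ - z₂‖ := by
        field_simp
        ring
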